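/- arXiv:1411.3334 — 2 statements merged into one kernel-verified Lean document; each statement's English description precedes it below -/
import Mathlib

section
/- For the spackling map spack(P) := ∏_{t=0}^{T} η_t(U_{≤t−1/2} P U_{≤t−1/2}†) applied to Paulis P on the circuit inputs, with T even: spack preserves the commutation relations of the Pauli group, i.e., spack(P) and spack(Q) commute if and only if P and Q commute, and spack(PQ) = ±spack(P)spack(Q). -/
/-! Every slice of `spack` is conjugation by the unitary `W t`, a ⋆-algebra automorphism: it is
multiplicative and carries a relation `P Q = ε • Q P` to each slice and back. So for anticommuting
`P, Q` every slice sign is `-1`, and the `T + 1` slices, an odd number, multiply to `-1`. -/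

theorem eq_neg_one_of_smul_eq_neg {R M : Type*} [Ring R] [IsCancelMulZero R] [AddCommGroup M]
    [Module R M] [Module.IsTorsionFree R M] {x y : M} {ε : R}
    (hneg : x = -y) (hne : x ≠ y) (h : x = ε • y) : ε = -1 := by
  have hy : y ≠ 0 := by rintro rfl; simp_all
  exact smul_left_injective R hy (by simp only [neg_one_smul, ← h, hneg])

theorem spackling_preserves_commutation_general {dim T : ℕ}
    (hT : Even T)
    (U : Fin T → Matrix (Fin dim) (Fin dim) ℂ)
    (hU : ∀ t, (U t).conjTranspose * U t = 1 ∧ U t * (U t).conjTranspose = 1)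
    (W : Fin (T + 1) → Matrix (Fin dim) (Fin dim) ℂ)
    (hW : ∀ t : Fin (T + 1),
      W t = ((List.ofFn U).take (t : ℕ)).reverse.prod)
    (PauliSet : Set (Matrix (Fin dim) (Fin dim) ℂ))
    (hsign : ∀ P ∈ PauliSet, ∀ Q ∈ PauliSet, P * Q = Q * P ∨ P * Q = -(Q * P))
    (spack : Matrix (Fin dim) (Fin dim) ℂ →
      Fin (T + 1) → Matrix (Fin dim) (Fin dim) ℂ)
    (hspack : ∀ P t, spack P t = W t * P * (W t).conjTranspose)
    (P Q : Matrix (Fin dim) (Fin dim) ℂ)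
    (hP : P ∈ PauliSet) (hQ : Q ∈ PauliSet) :
    ((∃ ε : Fin (T + 1) → ℂ,
        (∀ t, (ε t = 1 ∨ ε t = -1) ∧
          spack P t * spack Q t = ε t • (spack Q t * spack P t)) ∧
        (∏ t, ε t) = 1) ↔ P * Q = Q * P) ∧
    (∀ t, spack (P * Q) t = spack P t * spack Q t ∨
      spack (P * Q) t = -(spack P t * spack Q t)) := by
  have hWu : ∀ t, W t ∈ unitary (Matrix (Fin dim) (Fin dim) ℂ) := by
    intro t
    rw [hW t]
    refine list_prod_mem fun M hM => ?_
    obtain ⟨i, rfl⟩ := List.mem_ofFn.1 (List.mem_of_mem_take (List.mem_reverse.1 hM))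
    exact Unitary.mem_iff.2 (hU i)
  let φ t := Unitary.conjStarAlgAut ℂ (Matrix (Fin dim) (Fin dim) ℂ) ⟨W t, hWu t⟩
  have hφ : ∀ A t, spack A t = φ t A := hspack
  have hslice : ∀ t (ε : ℂ),
      spack P t * spack Q t = ε • (spack Q t * spack P t) ↔ P * Q = ε • (Q * P) := by
    intro t ε
    simp only [hφ, ← map_mul, ← map_smul, EmbeddingLike.apply_eq_iff_eq]
  refine ⟨⟨?_, fun hPQ => ⟨1, fun t => ⟨.inl rfl, by rw [Pi.one_apply, hslice, hPQ, one_smul]⟩,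
    Finset.prod_const_one⟩⟩, fun t => .inl (by simp only [hφ, map_mul])⟩
  rintro ⟨ε, hε, hprod⟩
  by_contra hPQ
  have hanti := (hsign P hP Q hQ).resolve_left hPQ
  have hneg : ∀ t, ε t = -1 := fun t =>
    eq_neg_one_of_smul_eq_neg hanti hPQ ((hslice t _).1 (hε t).2)
  norm_num [hneg, hT.add_one.neg_one_pow] at hprod

/-- The spackling map preserves commutation relations.  For a Clifford circuit of even
depth `T`, with partial products `W t = U_{t−1/2} ⋯ U_{1/2}` (`W 0 = I`), define
`spack(P) t = W t · P · W t†` (the time-evolved copy of the input Pauli `P` placed on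
slice `t`); the spackled operator is the tensor product of these `T+1` slices.
Then: (a) `spack(P)` and `spack(Q)` commute (as tensor operators: the per-slice
commutation signs `ε t ∈ {±1}` multiply to `+1`) if and only if `P` and `Q` commute;
(b) `spack(PQ) = ± spack(P)·spack(Q)` slicewise. -/
theorem spackling_preserves_commutation {dim T : ℕ}
    (hT : Even T)
    (U : Fin T → Matrix (Fin dim) (Fin dim) ℂ)
    (hU : ∀ t, (U t).conjTranspose * U t = 1 ∧ U t * (U t).conjTranspose = 1)
    (W : Fin (T + 1) → Matrix (Fin dim) (Fin dim) ℂ)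
    (hW : ∀ t : Fin (T + 1),
      W t = ((List.ofFn U).take (t : ℕ)).reverse.prod)
    (PauliSet : Set (Matrix (Fin dim) (Fin dim) ℂ))
    (hone : (1 : Matrix (Fin dim) (Fin dim) ℂ) ∈ PauliSet)
    (hsign : ∀ P ∈ PauliSet, ∀ Q ∈ PauliSet, P * Q = Q * P ∨ P * Q = -(Q * P))
    (spack : Matrix (Fin dim) (Fin dim) ℂ →
      Fin (T + 1) → Matrix (Fin dim) (Fin dim) ℂ)
    (hspack : ∀ P t, spack P t = W t * P * (W t).conjTranspose)
    (P Q : Matrix (Fin dim) (Fin dim) ℂ)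
    (hP : P ∈ PauliSet) (hQ : Q ∈ PauliSet) :
    ((∃ ε : Fin (T + 1) → ℂ,
        (∀ t, (ε t = 1 ∨ ε t = -1) ∧
          spack P t * spack Q t = ε t • (spack Q t * spack P t)) ∧
        (∏ t, ε t) = 1) ↔ P * Q = Q * P) ∧
    (∀ t, spack (P * Q) t = spack P t * spack Q t ∨
      spack (P * Q) t = -(spack P t * spack Q t)) :=
  spackling_preserves_commutation_general hT U hU W hW PauliSet hsign spack hspack P Q hP hQ
end

section
/- Consider w data qubits, a Pauli P = P₁⊗⋯⊗P_w, and the circuit that (1) initializes |+⟩^{⊗|V|} on vertex qubits and |0⟩^{⊗|E|} on edge qubits for a connected graph (V,E) with |V| = w, (2) for each i applies controlled-P_i from vertex qubit i to data qubit i and CNOTs from vertex qubit i to each incident edge qubit, (3) postselects vertex qubits onto ⟨+| and edge qubits onto ⟨0|. Then the resulting map on the data qubits equals (I + P)/2^w, i.e., it is proportional to the projector onto the +1 eigenspace of P. -/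
noncomputable section

/-- Tensor (Kronecker) product of single-qubit matrices over an index set. -/
def bigKron {ι : Type*} [Fintype ι] (f : ι → Matrix (Fin 2) (Fin 2) ℂ) :
    Matrix (ι → Fin 2) (ι → Fin 2) ℂ :=
  Matrix.of fun x y => ∏ i, f i (x i) (y i)

variable {w : ℕ} {Edge : Type*} [Fintype Edge] [DecidableEq Edge]

/-- The 𝔽₂ boundary of a vertex vector `v`: the edge `e` (with endpoints
`(ends e).1, (ends e).2`) gets `v a + v b`. -/
def bdry (ends : Edge → Fin w × Fin w) (v : Fin w → ZMod 2) : Edge → ZMod 2 :=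
  fun e => v (ends e).1 + v (ends e).2

/-- `P^v`: apply `P i` on data qubit `i` exactly when `v i = 1`. -/
def pexp (P : Fin w → Matrix (Fin 2) (Fin 2) ℂ) (v : Fin w → ZMod 2) :
    Matrix ((Fin w) → Fin 2) ((Fin w) → Fin 2) ℂ :=
  bigKron fun i => if v i = 1 then P i else 1

/-- Initialization step: data qubits pass through, vertex qubits are prepared in
`|+⟩^{⊗w}` (amplitude `(√2)⁻¹` for every basis state) and edge qubits in `|0⟩`. -/
def initMat (w : ℕ) (Edge : Type*) [Fintype Edge] [DecidableEq Edge] :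
    Matrix (((Fin w) → Fin 2) × ((Fin w) → ZMod 2) × (Edge → ZMod 2))
      ((Fin w) → Fin 2) ℂ :=
  Matrix.of fun q y =>
    if q.1 = y ∧ q.2.2 = 0 then (((Real.sqrt 2 : ℂ))⁻¹) ^ w else 0

/-- Postselection step: vertex qubits onto `⟨+|^{⊗w}`, edge qubits onto `⟨0|`. -/
def finalMat (w : ℕ) (Edge : Type*) [Fintype Edge] [DecidableEq Edge] :
    Matrix ((Fin w) → Fin 2)
      (((Fin w) → Fin 2) × ((Fin w) → ZMod 2) × (Edge → ZMod 2)) ℂ :=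
  Matrix.of fun y q =>
    if q.1 = y ∧ q.2.2 = 0 then (((Real.sqrt 2 : ℂ))⁻¹) ^ w else 0

/-- The controlled-gate step: for each `i`, a controlled-`P i` from vertex qubit `i` to
data qubit `i`, and CNOTs from vertex qubit `i` to each incident edge qubit. -/
def controlledMat (ends : Edge → Fin w × Fin w)
    (P : Fin w → Matrix (Fin 2) (Fin 2) ℂ) :
    Matrix (((Fin w) → Fin 2) × ((Fin w) → ZMod 2) × (Edge → ZMod 2))
      (((Fin w) → Fin 2) × ((Fin w) → ZMod 2) × (Edge → ZMod 2)) ℂ :=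
  Matrix.of fun q q' =>
    if q.2.1 = q'.2.1 ∧ q.2.2 = q'.2.2 + bdry ends q'.2.1
    then pexp P q'.2.1 q.1 q'.1 else 0

lemma bigKron_one {w : ℕ} :
    bigKron (fun _ : Fin w => (1 : Matrix (Fin 2) (Fin 2) ℂ)) = 1 := by
  ext x y
  simp only [bigKron, Matrix.of_apply, Matrix.one_apply]
  rw [Finset.prod_boole]
  simp [funext_iff]

lemma pexp_zero {w : ℕ} (P : Fin w → Matrix (Fin 2) (Fin 2) ℂ) : pexp P 0 = 1 := by
  have h : (fun i : Fin w => if (0 : Fin w → ZMod 2) i = 1 then P i else 1)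
      = fun _ : Fin w => (1 : Matrix (Fin 2) (Fin 2) ℂ) := by
    funext i
    simp
  rw [pexp, h, bigKron_one]

lemma pexp_ones {w : ℕ} (P : Fin w → Matrix (Fin 2) (Fin 2) ℂ) :
    pexp P (fun _ => 1) = bigKron P := by
  rw [pexp]
  congr 1

/-- **Fault-tolerant postselection gadget output** (Lemma gadget, part 1): for a
connected graph on the `w` vertices (with edge set described by `ends`), the gadget —
initialize `|+⟩^{⊗V}`, `|0⟩^{⊗E}`; apply the controlled Paulis and CNOTs; postselect
onto `⟨+|^{⊗V}`, `⟨0|^{⊗E}` — acts on the data qubits as `(I + P)/2^w`, i.e. it is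
proportional to the projector onto the `+1` eigenspace of `P = P₁⊗⋯⊗P_w`. -/
theorem gadget_is_projector (w : ℕ) (hw : 0 < w)
    (Edge : Type*) [Fintype Edge] [DecidableEq Edge] (ends : Edge → Fin w × Fin w)
    (hloop : ∀ e, (ends e).1 ≠ (ends e).2)
    (G : SimpleGraph (Fin w))
    (hGadj : ∀ a b, G.Adj a b ↔ a ≠ b ∧ ∃ e, ends e = (a, b) ∨ ends e = (b, a))
    (hG : G.Connected)
    (P : Fin w → Matrix (Fin 2) (Fin 2) ℂ)
    (hP : ∀ i, P i * P i = 1) (hPh : ∀ i, (P i).conjTranspose = P i) :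
    finalMat w Edge * controlledMat ends P * initMat w Edge
      = ((2 : ℂ) ^ w)⁻¹ • (1 + bigKron P) := by
  classical
  set c1 : Fin w → ZMod 2 := fun _ => 1 with hc1
  have hz2 : ∀ x y : ZMod 2, x + y = 0 → x = y := by decide
  -- boundary is zero iff v is constant
  have hbd : ∀ v : Fin w → ZMod 2, bdry ends v = 0 ↔ (v = 0 ∨ v = c1) := by
    intro v
    constructor
    · intro h
      have hadj : ∀ a b, G.Adj a b → v a = v b := by
        intro a b hab
        obtain ⟨hne, e, he⟩ := (hGadj a b).1 hab
        have h0 := congrFun h e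
        simp only [bdry, Pi.zero_apply] at h0
        rcases he with he | he <;> rw [he] at h0
        · exact hz2 _ _ h0
        · exact (hz2 _ _ h0).symm
      have hreach : ∀ a b, G.Reachable a b → v a = v b := by
        intro a b hr
        obtain ⟨p⟩ := hr
        induction p with
        | nil => rfl
        | cons hadj' p ih => exact (hadj _ _ hadj').trans ih
      set a0 : Fin w := ⟨0, hw⟩
      have hconst : ∀ i, v i = v a0 := fun i => (hreach a0 i (hG.preconnected a0 i)).symm
      rcases (by decide : ∀ x : ZMod 2, x = 0 ∨ x = 1) (v a0) with h0 | h0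
      · left; funext i; rw [hconst i, h0]; rfl
      · right; funext i; rw [hconst i, h0]
    · rintro (rfl | rfl) <;> funext e
      · simp [bdry]
      · have := hz2
        simp only [bdry, hc1, Pi.zero_apply]
        decide
  have hc1ne : (0 : Fin w → ZMod 2) ≠ c1 := by
    intro h
    have := congrFun h ⟨0, hw⟩
    simp [hc1] at this
  -- entrywise computation
  ext y y'
  rw [Matrix.mul_assoc, Matrix.mul_apply]
  simp only [finalMat, initMat, controlledMat, Matrix.mul_apply, Matrix.of_apply,
    Fintype.sum_prod_type, ite_and, ite_mul, zero_mul, mul_ite, mul_zero,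
    Finset.sum_ite_eq', Finset.sum_ite_eq, Finset.mem_univ, if_true, zero_add,
    Finset.sum_ite_irrel, Finset.sum_const_zero, Finset.mul_sum]
  simp only [hbd]
  have hmem : ∀ x : Fin w → ZMod 2,
      ((if x = 0 ∨ x = c1 then
        (((Real.sqrt 2 : ℂ))⁻¹) ^ w * (pexp P x y y' * (((Real.sqrt 2 : ℂ))⁻¹) ^ w)
       else 0) : ℂ)
      = (if x ∈ ({0, c1} : Finset (Fin w → ZMod 2)) then
        (((Real.sqrt 2 : ℂ))⁻¹) ^ w * (pexp P x y y' * (((Real.sqrt 2 : ℂ))⁻¹) ^ w)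
       else 0) := by
    intro x; simp
  rw [Finset.sum_congr rfl (fun x _ => hmem x), Finset.sum_ite_mem, Finset.univ_inter,
    Finset.sum_pair hc1ne, pexp_zero, hc1, pexp_ones]
  have h2 : ((Real.sqrt 2 : ℂ))⁻¹ ^ w * ((Real.sqrt 2 : ℂ))⁻¹ ^ w = ((2 : ℂ) ^ w)⁻¹ := by
    rw [← mul_pow, ← mul_inv, ← Complex.ofReal_mul,
      Real.mul_self_sqrt (by norm_num), ← inv_pow]
    norm_num
  simp only [Matrix.smul_apply, Matrix.add_apply, smul_eq_mul]
  rw [show ∀ a b c : ℂ, a * (b * c) = (a * c) * b from fun a b c => by ring,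
    show ∀ a b c : ℂ, a * (b * c) = (a * c) * b from fun a b c => by ring, h2]
  ring

end
end
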